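/- arXiv:0810.2054 — 6 statements merged into one kernel-verified Lean document; each statement's English description precedes it below -/
import Mathlib

section
/- If x is a real irrational root of a quadratic equation x² + px + q = 0 with integer coefficients p, q, then the continued fraction expansion of x is eventually periodic. -/
/-! Let `ζₙ = cq x n` and let `(hₙ, kₙ)` run through the convergents of `x`. Since
`x = (hₙ ζₙ₊₁ + hₙ₋₁) / (kₙ ζₙ₊₁ + kₙ₋₁)`, substituting into `x² + p x + q = 0` shows that
`ζₙ₊₁` is a root of `F(hₙ, kₙ) y² + B y + F(hₙ₋₁, kₙ₋₁)`, where `F(h, k) = h² + p h k + q k²`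
and `B` is its polar form. The approximation `|k x - h| < 1 / k` bounds `F` along the
convergents, and the middle coefficient is then bounded because the discriminant of this
equation is always `p² - 4q`. So the complete quotients are roots of finitely many nonzero
integer quadratics; two of them coincide, and from there on the expansion repeats. -/

open Polynomial
open QuadraticMap (polar)

/-- The sequence of complete quotients of the continued fraction algorithm. -/
noncomputable def cq (x : ℝ) : ℕ → ℝ
  | 0 => x
  | n + 1 => (Int.fract (cq x n))⁻¹

/-- The `n`-th digit of the continued fraction expansion of `x`. -/
noncomputable def cfDigit (x : ℝ) (n : ℕ) : ℤ := ⌊cq x n⌋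

namespace QuadraticCF

section CompleteQuotients

variable {x : ℝ}

theorem irrational_cq (hx : Irrational x) : ∀ n, Irrational (cq x n)
  | 0 => hx
  | n + 1 => by
    rw [cq, ← Int.self_sub_floor]
    exact ((irrational_cq hx n).sub_intCast _).inv

theorem fract_cq_pos (hx : Irrational x) (n : ℕ) : 0 < Int.fract (cq x n) :=
  (Int.fract_nonneg _).lt_of_ne fun h ↦
    (irrational_cq hx n).ne_int ⌊cq x n⌋ (by linarith [Int.floor_add_fract (cq x n)])

theorem one_lt_cq_succ (hx : Irrational x) (n : ℕ) : 1 < cq x (n + 1) :=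
  (one_lt_inv₀ (fract_cq_pos hx n)).2 (Int.fract_lt_one _)

theorem one_le_cfDigit_succ (hx : Irrational x) (n : ℕ) : 1 ≤ cfDigit x (n + 1) :=
  Int.le_floor.2 (by exact_mod_cast (one_lt_cq_succ hx n).le)

theorem cq_mul_cq_succ (hx : Irrational x) (n : ℕ) :
    cq x n * cq x (n + 1) = cfDigit x n * cq x (n + 1) + 1 := by
  have h : cq x (n + 1) * Int.fract (cq x n) = 1 := inv_mul_cancel₀ (fract_cq_pos hx n).ne'
  rw [← Int.self_sub_floor] at h
  rw [cfDigit]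
  linear_combination h

theorem cq_add_eq_of_cq_eq {m n : ℕ} (h : cq x m = cq x n) : ∀ i, cq x (m + i) = cq x (n + i)
  | 0 => h
  | i + 1 => by rw [← add_assoc, ← add_assoc, cq, cq, cq_add_eq_of_cq_eq h i]

theorem cfDigit_add_eq_of_cq_eq {m k : ℕ} (h : cq x m = cq x (m + k)) (n : ℕ) (hn : m ≤ n) :
    cfDigit x (n + k) = cfDigit x n := by
  obtain ⟨i, rfl⟩ := Nat.exists_eq_add_of_le hn
  rw [cfDigit, cfDigit, add_right_comm, ← cq_add_eq_of_cq_eq h i]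

end CompleteQuotients

/-- `convergent x (n + 1)` is the pair (numerator, denominator) of the `n`-th convergent of `x`;
`convergent x 0 = (1, 0)` is the customary `(p₋₁, q₋₁)`. -/
noncomputable def convergent (x : ℝ) : ℕ → ℤ × ℤ
  | 0 => (1, 0)
  | 1 => (cfDigit x 0, 1)
  | n + 2 => cfDigit x (n + 1) • convergent x (n + 1) + convergent x n

theorem convergent_det (x : ℝ) : ∀ n : ℕ,
    (convergent x (n + 1)).1 * (convergent x n).2 - (convergent x n).1 * (convergent x (n + 1)).2
      = (-1) ^ (n + 1)
  | 0 => by simp [convergent]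
  | n + 1 => by
    simp only [convergent, Prod.fst_add, Prod.snd_add, Prod.smul_fst, Prod.smul_snd, smul_eq_mul]
    linear_combination (-1 : ℤ) * convergent_det x n

section Convergents

variable {x : ℝ}

theorem convergent_snd_nonneg_and_one_le (hx : Irrational x) :
    ∀ n : ℕ, 0 ≤ (convergent x n).2 ∧ 1 ≤ (convergent x (n + 1)).2
  | 0 => by simp [convergent]
  | n + 1 => by
    obtain ⟨h₀, h₁⟩ := convergent_snd_nonneg_and_one_le hx n
    refine ⟨by linarith, ?_⟩
    simp only [convergent, Prod.snd_add, Prod.smul_snd, smul_eq_mul]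
    nlinarith [one_le_cfDigit_succ hx n]

theorem one_le_convergent_succ_snd (hx : Irrational x) (n : ℕ) : 1 ≤ (convergent x (n + 1)).2 :=
  (convergent_snd_nonneg_and_one_le hx n).2

theorem mul_convergent_eq (hx : Irrational x) : ∀ n : ℕ,
    x * ((convergent x (n + 1)).2 * cq x (n + 1) + (convergent x n).2)
      = (convergent x (n + 1)).1 * cq x (n + 1) + (convergent x n).1
  | 0 => by
    have h : x * cq x 1 = cfDigit x 0 * cq x 1 + 1 := cq_mul_cq_succ hx 0
    simp only [convergent]
    push_cast
    linear_combination h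
  | n + 1 => by
    simp only [convergent, Prod.fst_add, Prod.snd_add, Prod.smul_fst, Prod.smul_snd, smul_eq_mul]
    push_cast
    linear_combination cq x (n + 2) * mul_convergent_eq hx n
      - (x * (convergent x (n + 1)).2 - (convergent x (n + 1)).1) * cq_mul_cq_succ hx (n + 1)

theorem abs_mul_sub_convergent_mul_lt_one (hx : Irrational x) (n : ℕ) :
    |x * (convergent x (n + 1)).2 - (convergent x (n + 1)).1| * (convergent x (n + 1)).2 < 1 := by
  set h := (convergent x (n + 1)).1
  set k := (convergent x (n + 1)).2
  set D := (k : ℝ) * cq x (n + 1) + (convergent x n).2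
  have hk : (1 : ℝ) ≤ k := by exact_mod_cast one_le_convergent_succ_snd hx n
  have hkD : (k : ℝ) < D := by
    have : (0 : ℝ) ≤ (convergent x n).2 := by
      exact_mod_cast (convergent_snd_nonneg_and_one_le hx n).1
    nlinarith [one_lt_cq_succ hx n]
  -- the determinant formula makes `(x k - h) D = ±1`
  have hD : |x * k - h| * D = 1 := by
    have hdet :
        ((h * (convergent x n).2 - (convergent x n).1 * k : ℤ) : ℝ) = (-1) ^ (n + 1) := by
      exact_mod_cast convergent_det x n
    push_cast at hdet
    rw [← abs_of_pos (show 0 < D by linarith), ← abs_mul]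
    rw [show (x * k - h) * D = -(-1) ^ (n + 1) by
      linear_combination k * mul_convergent_eq hx n - hdet]
    simp
  have hpos : 0 < |x * k - h| := pos_of_mul_pos_left (hD ▸ one_pos) (by linarith)
  calc |x * k - h| * k < |x * k - h| * D := by gcongr
    _ = 1 := hD

end Convergents

def quadForm (p q : ℤ) (v : ℤ × ℤ) : ℤ := v.1 ^ 2 + p * v.1 * v.2 + q * v.2 ^ 2

theorem discrim_quadForm_polar (p q : ℤ) (v w : ℤ × ℤ) :
    discrim (quadForm p q v) (polar (quadForm p q) v w) (quadForm p q w)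
      = discrim 1 p q * (v.1 * w.2 - w.1 * v.2) ^ 2 := by
  simp only [discrim, polar, quadForm, Prod.fst_add, Prod.snd_add]
  ring

section QuadForm

variable {x : ℝ} {p q : ℤ}

theorem quadForm_eq_mul (hroot : x ^ 2 + p * x + q = 0) (v : ℤ × ℤ) :
    (quadForm p q v : ℝ) = (v.1 - x * v.2) * (v.1 + (x + p) * v.2) := by
  simp only [quadForm]
  push_cast
  linear_combination (v.2 : ℝ) ^ 2 * hroot

theorem quadForm_ne_zero (hx : Irrational x) (hroot : x ^ 2 + p * x + q = 0) {v : ℤ × ℤ}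
    (hv : v.2 ≠ 0) : quadForm p q v ≠ 0 := by
  intro h0
  have h := quadForm_eq_mul hroot v
  rw [h0, Int.cast_zero, eq_comm, mul_eq_zero] at h
  rcases h with h | h
  · exact (hx.mul_intCast hv).ne_int v.1 (by linarith)
  · exact ((hx.add_intCast p).mul_intCast hv).ne_int (-v.1) (by push_cast; linarith)

theorem abs_quadForm_le (hroot : x ^ 2 + p * x + q = 0) {v : ℤ × ℤ} (hk : 1 ≤ v.2)
    (happrox : |x * v.2 - v.1| * v.2 ≤ 1) : |(quadForm p q v : ℝ)| ≤ 1 + |2 * x + p| := by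
  set e := x * v.2 - v.1
  have hk' : (1 : ℝ) ≤ v.2 := by exact_mod_cast hk
  have he : |e| ≤ 1 := (le_mul_of_one_le_right (abs_nonneg e) hk').trans happrox
  rw [quadForm_eq_mul hroot, show (v.1 : ℝ) - x * v.2 = -e by ring,
    show (v.1 : ℝ) + (x + p) * v.2 = -e + (2 * x + p) * v.2 by ring, abs_mul, abs_neg]
  calc |e| * |-e + (2 * x + p) * v.2| ≤ |e| * (|e| + |2 * x + p| * v.2) := by
        gcongr
        refine (abs_add_le _ _).trans_eq ?_
        rw [abs_neg, abs_mul, abs_of_nonneg (by linarith : (0 : ℝ) ≤ v.2)]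
    _ = |e| * |e| + |2 * x + p| * (|e| * v.2) := by ring
    _ ≤ 1 + |2 * x + p| * 1 :=
        add_le_add (mul_le_one₀ he (abs_nonneg e) he) (by gcongr)
    _ = 1 + |2 * x + p| := by rw [mul_one]

theorem quadForm_mul_sq_add_polar_mul_add_quadForm (hroot : x ^ 2 + p * x + q = 0)
    {v w : ℤ × ℤ} {y : ℝ} (hxy : x * (v.2 * y + w.2) = v.1 * y + w.1) :
    (quadForm p q v : ℝ) * y ^ 2 + ((polar (quadForm p q) v w : ℤ) : ℝ) * y
      + quadForm p q w = 0 := by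
  simp only [polar, quadForm, Prod.fst_add, Prod.snd_add]
  push_cast
  linear_combination ((v.2 : ℝ) * y + w.2) ^ 2 * hroot
    - (v.1 * y + w.1 + (x + p) * (v.2 * y + w.2)) * hxy

end QuadForm

theorem abs_le_of_discrim_eq {a b c d M : ℤ} (h : discrim a b c = d) (ha : |a| ≤ M)
    (hc : |c| ≤ M) : |b| ≤ |d| + 4 * M ^ 2 := by
  have hac : a * c ≤ M ^ 2 := (le_abs_self _).trans <| by
    rw [abs_mul, sq]
    exact mul_le_mul ha hc (abs_nonneg _) ((abs_nonneg _).trans ha)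
  have hb : |b| ≤ b ^ 2 := by simpa only [sq_abs] using Int.le_self_sq |b|
  rw [discrim] at h
  linarith [le_abs_self d]

def rootsOfHeightLE (L : ℤ) : Set ℝ :=
  {y | ∃ a b c : ℤ, a ≠ 0 ∧ |a| ≤ L ∧ |b| ≤ L ∧ |c| ≤ L ∧
    a * y ^ 2 + b * y + c = 0}

theorem finite_setOf_quadratic_eq_zero {a b c : ℝ} (ha : a ≠ 0) :
    {y : ℝ | a * y ^ 2 + b * y + c = 0}.Finite := by
  have hP : C a * X ^ 2 + C b * X + C c ≠ 0 := fun h ↦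
    ha (by rw [← leadingCoeff_quadratic (b := b) (c := c) ha, h, leadingCoeff_zero])
  simpa using finite_setOfPred_isRoot hP

theorem finite_rootsOfHeightLE (L : ℤ) : (rootsOfHeightLE L).Finite := by
  have hbox :
      (Set.Icc (-L) L ×ˢ Set.Icc (-L) L ×ˢ Set.Icc (-L) L : Set (ℤ × ℤ × ℤ)).Finite :=
    (Set.finite_Icc _ _).prod ((Set.finite_Icc _ _).prod (Set.finite_Icc _ _))
  refine ((hbox.inter_of_left {t | t.1 ≠ 0}).biUnion fun t ht ↦
    finite_setOf_quadratic_eq_zero (b := t.2.1) (c := t.2.2) (Int.cast_ne_zero.2 ht.2)).subset ?_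
  rintro y ⟨a, b, c, ha, hA, hB, hC, hy⟩
  exact Set.mem_biUnion (x := (a, b, c)) ⟨⟨abs_le.1 hA, abs_le.1 hB, abs_le.1 hC⟩, ha⟩ hy

section Periodicity

variable {x : ℝ} {p q : ℤ}

theorem abs_quadForm_convergent_le (hx : Irrational x) (hroot : x ^ 2 + p * x + q = 0) :
    ∀ n, |quadForm p q (convergent x n)| ≤ ⌈1 + |2 * x + p|⌉
  | 0 => by
    have : (1 : ℝ) ≤ ⌈1 + |2 * x + p|⌉ := by
      linarith [Int.le_ceil (1 + |2 * x + p|), abs_nonneg (2 * x + p)]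
    simpa [quadForm, convergent] using this
  | n + 1 => by
    have h := (abs_quadForm_le hroot (one_le_convergent_succ_snd hx n)
      (abs_mul_sub_convergent_mul_lt_one hx n).le).trans (Int.le_ceil _)
    exact_mod_cast h

theorem exists_forall_cq_succ_mem_rootsOfHeightLE (hx : Irrational x)
    (hroot : x ^ 2 + p * x + q = 0) : ∃ L, ∀ n, cq x (n + 1) ∈ rootsOfHeightLE L := by
  set M := ⌈1 + |2 * x + p|⌉
  have hA := abs_quadForm_convergent_le hx hroot
  have hML : M ≤ |discrim 1 p q| + 4 * M ^ 2 := by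
    nlinarith [abs_nonneg (discrim 1 p q), Int.le_self_sq M]
  refine ⟨|discrim 1 p q| + 4 * M ^ 2, fun n ↦ ⟨_, _, _,
    quadForm_ne_zero hx hroot (one_pos.trans_le (one_le_convergent_succ_snd hx n)).ne',
    (hA (n + 1)).trans hML,
    abs_le_of_discrim_eq ?_ (hA (n + 1)) (hA n), (hA n).trans hML,
    quadForm_mul_sq_add_polar_mul_add_quadForm hroot (mul_convergent_eq hx n)⟩⟩
  rw [discrim_quadForm_polar, convergent_det, ← pow_mul, pow_mul', neg_one_sq, one_pow, mul_one]

end Periodicity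

end QuadraticCF

open QuadraticCF in
/-- If `x` is a real irrational root of `x² + px + q = 0` with integer `p, q`,
then its continued fraction expansion is eventually periodic. -/
theorem cf_of_quadratic_irrational_eventually_periodic
    (x : ℝ) (p q : ℤ) (hirr : Irrational x)
    (hroot : x ^ 2 + (p : ℝ) * x + (q : ℝ) = 0) :
    ∃ N k : ℕ, 1 ≤ k ∧ ∀ n ≥ N, cfDigit x (n + k) = cfDigit x n := by
  obtain ⟨L, hL⟩ := exists_forall_cq_succ_mem_rootsOfHeightLE hirr hroot
  obtain ⟨m, n, hmn, hcq⟩ := (finite_rootsOfHeightLE L).exists_lt_map_eq_of_forall_mem hL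
  refine ⟨m + 1, n - m, by omega, cfDigit_add_eq_of_cq_eq ?_⟩
  rw [show m + 1 + (n - m) = n + 1 by omega]
  exact hcq
end

section
/- With the recursion Aᵢ, Bᵢ, Cᵢ as defined (A_{i+1} = Aᵢaᵢ² + Bᵢaᵢ + Cᵢ, B_{i+1} = Bᵢ + 2Aᵢaᵢ, C_{i+1} = Aᵢ), the discriminant is invariant: Bᵢ² - 4AᵢCᵢ = B₀² - 4A₀C₀ for all i. -/
/-- Substituting `x = a + 1 / y` into `A x² + B x + C` and clearing `y²` yields the quadratic
with coefficients `(A a² + B a + C, B + 2 A a, A)`. -/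
theorem discrim_shift_inv {R : Type*} [CommRing R] (A B C a : R) :
    discrim (A * a ^ 2 + B * a + C) (B + 2 * A * a) A = discrim A B C := by
  unfold discrim
  ring

/-- The discriminant `Bᵢ² - 4AᵢCᵢ` is invariant under the recursion
`A_{i+1} = Aᵢaᵢ²+Bᵢaᵢ+Cᵢ`, `B_{i+1} = Bᵢ+2Aᵢaᵢ`, `C_{i+1} = Aᵢ`. -/
theorem discriminant_invariant
    (a A B C : ℕ → ℤ)
    (hA : ∀ i, A (i + 1) = A i * (a i) ^ 2 + B i * a i + C i)
    (hB : ∀ i, B (i + 1) = B i + 2 * A i * a i)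
    (hC : ∀ i, C (i + 1) = A i) :
    ∀ i : ℕ, (B i) ^ 2 - 4 * A i * C i = (B 0) ^ 2 - 4 * A 0 * C 0 := by
  intro i
  change discrim (A i) (B i) (C i) = discrim (A 0) (B 0) (C 0)
  induction i with
  | zero => rfl
  | succ n ih => rw [hA, hB, hC, discrim_shift_inv, ih]
end

section
/- In the quadratic-coefficient recursion for complete quotients of a quadratic irrational, the coefficients Aᵢ are bounded: for all i ≥ 1, |Aᵢ| < 2|A₀x₀| + |A₀| + |B₀|. -/
/-!
Let `fᵢ(X, Y) = AᵢX² + BᵢXY + CᵢY²`. The recursion says `fᵢ₊₁(X, Y) = fᵢ(aᵢX + Y, X)`, so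
`fᵢ` is `f₀` composed with the matrix of convergents and `Aᵢ = f₀(p, q)` for the convergent
`p/q = pᵢ₋₁/qᵢ₋₁`. Writing `p = q x₀ + e` and using `f₀(x₀, 1) = 0` gives
`Aᵢ = e (A₀e + (2A₀x₀ + B₀) q)`. Since `e (q xᵢ + qᵢ₋₂) = ±1` and `xᵢ > 1`, we get `q |e| < 1`
with `q ≥ 1`, hence `|Aᵢ| < |A₀| + |2A₀x₀ + B₀|`.
-/

/-- Indices are shifted by two: `convNum a (n + 2) = pₙ` and `convDen a (n + 2) = qₙ`, with the
seeds `p₋₂ = 0`, `p₋₁ = 1`, `q₋₂ = 1`, `q₋₁ = 0`. -/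
def convNum (a : ℕ → ℤ) : ℕ → ℤ
  | 0 => 0
  | 1 => 1
  | n + 2 => a n * convNum a (n + 1) + convNum a n

def convDen (a : ℕ → ℤ) : ℕ → ℤ
  | 0 => 1
  | 1 => 0
  | n + 2 => a n * convDen a (n + 1) + convDen a n

section Convergents

variable (a : ℕ → ℤ)

lemma convNum_add_two (n : ℕ) : convNum a (n + 2) = a n * convNum a (n + 1) + convNum a n := rfl

lemma convDen_add_two (n : ℕ) : convDen a (n + 2) = a n * convDen a (n + 1) + convDen a n := rfl

theorem convNum_mul_convDen_sub_convNum_mul_convDen (n : ℕ) :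
    convNum a (n + 1) * convDen a n - convNum a n * convDen a (n + 1) = (-1) ^ n := by
  induction n with
  | zero => simp [convNum, convDen]
  | succ n ih =>
    rw [convNum_add_two, convDen_add_two, pow_succ]
    linear_combination -ih

variable {a}

theorem one_le_convDen (ha : ∀ i, 1 ≤ a (i + 1)) (n : ℕ) : 1 ≤ convDen a (n + 2) := by
  suffices h : ∀ n, 1 ≤ convDen a (n + 2) ∧ 0 ≤ convDen a (n + 1) from (h n).1
  intro n
  induction n with
  | zero => simp [convDen]
  | succ n ih =>
    rw [convDen_add_two]
    exact ⟨by nlinarith [ha n], by linarith⟩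

theorem convDen_nonneg (ha : ∀ i, 1 ≤ a (i + 1)) : ∀ n, 0 ≤ convDen a n
  | 0 => zero_le_one
  | 1 => le_rfl
  | n + 2 => zero_le_one.trans (one_le_convDen ha n)

theorem quadForm_eq_comp_convergents {A B C : ℕ → ℤ}
    (hA : ∀ i, A (i + 1) = A i * a i ^ 2 + B i * a i + C i)
    (hB : ∀ i, B (i + 1) = B i + 2 * A i * a i) (hC : ∀ i, C (i + 1) = A i) (i : ℕ) (X Y : ℤ) :
    A i * X ^ 2 + B i * X * Y + C i * Y ^ 2 =
      A 0 * (convNum a (i + 1) * X + convNum a i * Y) ^ 2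
        + B 0 * (convNum a (i + 1) * X + convNum a i * Y)
          * (convDen a (i + 1) * X + convDen a i * Y)
        + C 0 * (convDen a (i + 1) * X + convDen a i * Y) ^ 2 := by
  induction i generalizing X Y with
  | zero => simp [convNum, convDen]
  | succ i ih =>
    have step : A (i + 1) * X ^ 2 + B (i + 1) * X * Y + C (i + 1) * Y ^ 2 =
        A i * (a i * X + Y) ^ 2 + B i * (a i * X + Y) * X + C i * X ^ 2 := by
      rw [hA, hB, hC]; ring
    rw [step, ih, convNum_add_two, convDen_add_two]
    ring

theorem coeff_eq_quadForm_convergent {A B C : ℕ → ℤ}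
    (hA : ∀ i, A (i + 1) = A i * a i ^ 2 + B i * a i + C i)
    (hB : ∀ i, B (i + 1) = B i + 2 * A i * a i) (hC : ∀ i, C (i + 1) = A i) (i : ℕ) :
    A i = A 0 * convNum a (i + 1) ^ 2 + B 0 * convNum a (i + 1) * convDen a (i + 1)
      + C 0 * convDen a (i + 1) ^ 2 := by
  simpa using quadForm_eq_comp_convergents hA hB hC i 1 0

theorem mul_convDen_add_eq_convNum_add {x : ℕ → ℝ}
    (hx : ∀ i, x i * x (i + 1) = a i * x (i + 1) + 1) (n : ℕ) :
    x 0 * (convDen a (n + 1) * x n + convDen a n) = convNum a (n + 1) * x n + convNum a n := by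
  induction n with
  | zero => simp [convNum, convDen]
  | succ n ih =>
    push_cast [convNum_add_two, convDen_add_two]
    linear_combination x (n + 1) * ih - (x 0 * convDen a (n + 1) - convNum a (n + 1)) * hx n

theorem convNum_sub_mul_mul_convDen_add {x : ℕ → ℝ}
    (hx : ∀ i, x i * x (i + 1) = a i * x (i + 1) + 1) (n : ℕ) :
    (convNum a (n + 1) - convDen a (n + 1) * x 0) * (convDen a (n + 1) * x n + convDen a n)
      = (-1) ^ n := by
  have hdet : (convNum a (n + 1) * convDen a n - convNum a n * convDen a (n + 1) : ℝ)
      = (-1) ^ n := by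
    exact_mod_cast convNum_mul_convDen_sub_convNum_mul_convDen a n
  linear_combination hdet - convDen a (n + 1) * mul_convDen_add_eq_convNum_add hx n

end Convergents

structure IsCompleteQuotients (x : ℕ → ℝ) (a : ℕ → ℤ) : Prop where
  floor_eq : ∀ i, a i = ⌊x i⌋
  succ_eq : ∀ i, x (i + 1) = (x i - a i)⁻¹

namespace IsCompleteQuotients

variable {x : ℕ → ℝ} {a : ℕ → ℤ}

theorem irrational (h : IsCompleteQuotients x a) (hirr : Irrational (x 0)) (i : ℕ) :
    Irrational (x i) := by
  induction i with
  | zero => exact hirr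
  | succ i ih => rw [h.succ_eq]; exact (ih.sub_intCast _).inv

theorem one_lt_succ (h : IsCompleteQuotients x a) (hirr : Irrational (x 0)) (i : ℕ) :
    1 < x (i + 1) := by
  rw [h.succ_eq, h.floor_eq, Int.self_sub_floor]
  exact one_lt_inv_iff₀.2
    ⟨Int.fract_pos.2 ((h.irrational hirr i).ne_int _), Int.fract_lt_one _⟩

theorem one_le_partialQuotient_succ (h : IsCompleteQuotients x a) (hirr : Irrational (x 0))
    (i : ℕ) : 1 ≤ a (i + 1) := by
  rw [h.floor_eq]
  exact Int.le_floor.2 (by exact_mod_cast (h.one_lt_succ hirr i).le)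

theorem mul_succ_eq (h : IsCompleteQuotients x a) (hirr : Irrational (x 0)) (i : ℕ) :
    x i * x (i + 1) = a i * x (i + 1) + 1 := by
  have hne : x i - a i ≠ 0 := sub_ne_zero.2 ((h.irrational hirr i).ne_int _)
  rw [h.succ_eq]
  linear_combination inv_mul_cancel₀ hne

theorem convDen_mul_abs_convNum_sub_lt_one (h : IsCompleteQuotients x a)
    (hirr : Irrational (x 0)) (n : ℕ) :
    convDen a (n + 2) * |convNum a (n + 2) - convDen a (n + 2) * x 0| < 1 := by
  have ha := h.one_le_partialQuotient_succ hirr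
  have hq : (1 : ℝ) ≤ convDen a (n + 2) := by exact_mod_cast one_le_convDen ha n
  have hq' : (0 : ℝ) ≤ convDen a (n + 1) := by exact_mod_cast convDen_nonneg ha _
  set q : ℝ := (convDen a (n + 2) : ℝ)
  have hden : q < q * x (n + 1) + convDen a (n + 1) := by nlinarith [h.one_lt_succ hirr n]
  have herr : |convNum a (n + 2) - q * x 0| * (q * x (n + 1) + convDen a (n + 1)) = 1 := by
    rw [← abs_of_pos (by linarith : 0 < q * x (n + 1) + convDen a (n + 1)), ← abs_mul,
      convNum_sub_mul_mul_convDen_add (h.mul_succ_eq hirr) (n + 1), abs_neg_one_pow]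
  nlinarith [abs_nonneg (convNum a (n + 2) - q * x 0)]

end IsCompleteQuotients

theorem abs_quadForm_lt {A B C x p q : ℝ} (hA : A ≠ 0) (hroot : A * x ^ 2 + B * x + C = 0)
    (hq : 1 ≤ q) (happrox : q * |p - q * x| < 1) :
    |A * p ^ 2 + B * p * q + C * q ^ 2| < |A| + |2 * A * x + B| := by
  set e := p - q * x
  have he : |e| < 1 := by nlinarith [abs_nonneg e]
  have hform : A * p ^ 2 + B * p * q + C * q ^ 2 = A * e * e + (2 * A * x + B) * (q * e) := by
    linear_combination q ^ 2 * hroot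
  calc |A * p ^ 2 + B * p * q + C * q ^ 2|
      = |A * e * e + (2 * A * x + B) * (q * e)| := by rw [hform]
    _ ≤ |A * e * e| + |(2 * A * x + B) * (q * e)| := abs_add_le _ _
    _ = |A| * |e| * |e| + |2 * A * x + B| * (q * |e|) := by
        simp only [abs_mul, abs_of_nonneg (zero_le_one.trans hq)]
    _ < |A| + |2 * A * x + B| := by
        have hsq : |e| * |e| < 1 := by nlinarith [abs_nonneg e]
        have := mul_lt_mul_of_pos_left hsq (abs_pos.2 hA)
        nlinarith [abs_nonneg (2 * A * x + B)]

/-- Khinchin's bound: in the quadratic-coefficient recursion for the complete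
quotients of a quadratic irrational, for all i ≥ 1, |Aᵢ| < 2|A₀x₀| + |A₀| + |B₀|. -/
theorem coefficient_bound
    (x : ℕ → ℝ) (a A B C : ℕ → ℤ)
    (hirr : Irrational (x 0))
    (hA0 : A 0 ≠ 0)
    (ha : ∀ i, a i = ⌊x i⌋)
    (hx : ∀ i, x (i + 1) = (x i - (a i : ℝ))⁻¹)
    (hA : ∀ i, A (i + 1) = A i * (a i) ^ 2 + B i * a i + C i)
    (hB : ∀ i, B (i + 1) = B i + 2 * A i * a i)
    (hC : ∀ i, C (i + 1) = A i)
    (hroot : (A 0 : ℝ) * (x 0) ^ 2 + (B 0 : ℝ) * x 0 + (C 0 : ℝ) = 0) :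
    ∀ i : ℕ, 1 ≤ i →
      (|(A i : ℝ)| < 2 * |(A 0 : ℝ) * x 0| + |(A 0 : ℝ)| + |(B 0 : ℝ)|) := by
  intro i hi
  obtain ⟨n, rfl⟩ := Nat.exists_eq_add_of_le' hi
  have hcq : IsCompleteQuotients x a := ⟨ha, hx⟩
  have hform : (A (n + 1) : ℝ) = A 0 * convNum a (n + 2) ^ 2
      + B 0 * convNum a (n + 2) * convDen a (n + 2) + C 0 * convDen a (n + 2) ^ 2 := by
    exact_mod_cast coeff_eq_quadForm_convergent hA hB hC (n + 1)
  calc |(A (n + 1) : ℝ)| < |(A 0 : ℝ)| + |2 * A 0 * x 0 + B 0| := by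
        rw [hform]
        exact abs_quadForm_lt (by exact_mod_cast hA0) hroot
          (by exact_mod_cast one_le_convDen (hcq.one_le_partialQuotient_succ hirr) n)
          (hcq.convDen_mul_abs_convNum_sub_lt_one hirr n)
    _ ≤ 2 * |(A 0 : ℝ) * x 0| + |(A 0 : ℝ)| + |(B 0 : ℝ)| := by
        have := abs_add_le (2 * (A 0 * x 0) : ℝ) (B 0)
        rw [abs_mul, abs_two, ← mul_assoc] at this
        linarith
end

section
/- Let y₁ and y₂ be distinct real irrational roots of ay² + by + c = 0 with integer coefficients a ≠ 0, b, c. Then there exists a hyperbolic matrix M ∈ SL(2, ℤ) such that (1, y₁) and (1, y₂) are both eigenvectors of M. -/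
/-- For distinct real irrational roots y₁, y₂ of an integer quadratic
`ay² + by + c = 0` (a ≠ 0), there is a hyperbolic M ∈ SL(2,ℤ) having
(1, y₁) and (1, y₂) as eigenvectors. -/
theorem exists_hyperbolic_matrix_with_eigenvectors
    (a b c : ℤ) (ha : a ≠ 0) (y₁ y₂ : ℝ)
    (h1 : Irrational y₁) (h2 : Irrational y₂) (hne : y₁ ≠ y₂)
    (hroot1 : (a : ℝ) * y₁ ^ 2 + (b : ℝ) * y₁ + (c : ℝ) = 0)
    (hroot2 : (a : ℝ) * y₂ ^ 2 + (b : ℝ) * y₂ + (c : ℝ) = 0) :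
    ∃ M : Matrix (Fin 2) (Fin 2) ℤ, M.det = 1 ∧ |M.trace| > 2 ∧
      (∃ l₁ : ℝ, (M.map (Int.cast : ℤ → ℝ)).mulVec ![1, y₁] = l₁ • ![1, y₁]) ∧
      (∃ l₂ : ℝ, (M.map (Int.cast : ℤ → ℝ)).mulVec ![1, y₂] = l₂ • ![1, y₂]) := by
  have haR : (a : ℝ) ≠ 0 := Int.cast_ne_zero.mpr ha
  have hsub : y₁ - y₂ ≠ 0 := sub_ne_zero.mpr hne
  -- sum and product of roots
  have hs : (a : ℝ) * (y₁ + y₂) = -b := by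
    have h := sub_eq_zero.mpr (hroot1.trans hroot2.symm)
    have h' : (y₁ - y₂) * ((a : ℝ) * (y₁ + y₂) + b) = 0 := by ring_nf; nlinarith [h]
    rcases mul_eq_zero.mp h' with h'' | h''
    · exact absurd h'' hsub
    · linarith
  have hp : (a : ℝ) * (y₁ * y₂) = c := by linear_combination y₁ * hs - hroot1
  set D : ℤ := b ^ 2 - 4 * a * c with hDdef
  have hDr : (D : ℝ) = ((a : ℝ) * (y₁ - y₂)) ^ 2 := by
    rw [hDdef]
    push_cast
    linear_combination ((b : ℝ) - (a : ℝ) * (y₁ + y₂)) * hs + 4 * (a : ℝ) * hp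
  have hD : 0 < D := by
    have : (0 : ℝ) < (D : ℝ) := by
      rw [hDr]; positivity
    exact_mod_cast this
  have hsq : ¬ IsSquare D := by
    rintro ⟨k, hk⟩
    have hk' : ((a : ℝ) * (y₁ - y₂)) ^ 2 = ((k : ℝ)) ^ 2 := by
      rw [← hDr, hk]; push_cast; ring
    have := sq_eq_sq_iff_eq_or_eq_neg.mp hk'
    rcases this with h | h
    · exact h1 ⟨((k - b : ℤ) : ℚ) / ((2 * a : ℤ) : ℚ), by
        push_cast
        rw [div_eq_iff (mul_ne_zero two_ne_zero haR)]
        linear_combination -h - hs⟩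
    · exact h1 ⟨((-k - b : ℤ) : ℚ) / ((2 * a : ℤ) : ℚ), by
        push_cast
        rw [div_eq_iff (mul_ne_zero two_ne_zero haR)]
        linear_combination -h - hs⟩
  obtain ⟨x, y, hxy, hy⟩ := Pell.exists_of_not_isSquare hD hsq
  refine ⟨!![x + b * y, a * (2 * y); -(c * (2 * y)), x - b * y], ?_, ?_, ?_, ?_⟩
  · rw [Matrix.det_fin_two_of]; nlinarith [hxy, sq_nonneg y]
  · rw [Matrix.trace_fin_two_of]
    have hy2 : 1 ≤ y ^ 2 := by rcases hy.lt_or_gt with h | h <;> nlinarith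
    have hx2 : 1 < x ^ 2 := by nlinarith [hxy, hD]
    have : 1 < |x| := by nlinarith [sq_abs x, abs_nonneg x]
    calc (2 : ℤ) < 2 * |x| := by linarith
    _ = |x + b * y + (x - b * y)| := by rw [show x + b*y + (x - b*y) = 2*x by ring, abs_mul]; norm_num
  · refine ⟨(x + b * y : ℤ) + (a * (2 * y) : ℤ) * y₁, ?_⟩
    funext i
    fin_cases i
    · simp [Matrix.mulVec, dotProduct, Matrix.map_apply]
    · simp [Matrix.mulVec, dotProduct, Matrix.map_apply]
      push_cast
      linear_combination (-(2 * (y : ℝ))) * hroot1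
  · refine ⟨(x + b * y : ℤ) + (a * (2 * y) : ℤ) * y₂, ?_⟩
    funext i
    fin_cases i
    · simp [Matrix.mulVec, dotProduct, Matrix.map_apply]
    · simp [Matrix.mulVec, dotProduct, Matrix.map_apply]
      push_cast
      linear_combination (-(2 * (y : ℝ))) * hroot2
end

section
/- Let M ∈ SL(2, ℤ) be hyperbolic with irrational eigenvector slopes e₁ and e₂ (i.e., (1, e₁) and (1, e₂) are eigenvectors). Then the period of the continued fraction expansion of e₁, viewed as a cyclic sequence, is the reverse of the period of the continued fraction expansion of e₂. -/
/-- `b` is a period of the (eventually periodic) continued fraction of `x`. -/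
def IsCFPeriod (x : ℝ) (b : List ℤ) : Prop :=
  b ≠ [] ∧ ∃ N : ℕ, ∀ i : ℕ, cfDigit x (N + i) = b.getD (i % b.length) 0

/-- `b` is a minimal period of the continued fraction of `x`. -/
def IsMinCFPeriod (x : ℝ) (b : List ℤ) : Prop :=
  IsCFPeriod x b ∧ ∀ c : List ℤ, IsCFPeriod x c → b.length ≤ c.length

/-!
Let `A` be the product of the matrices `!![a, 1; 1, 0]` over a period `b` of the continued
fraction of `e₁`, acting on `ℝ` by Möbius transformations. Some complete quotient `y > 1` of `e₁`
is a fixed point of `A`, and `e₁ = C • y` for a unimodular `C`. As `e₂` is the Galois conjugate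
of `e₁`, `z = C⁻¹ • e₂` is the other fixed point of `A`. The transpose `Aᵀ` is the matrix of
`b.reverse` and fixes both `-1/y ∈ (-1, 0)` and `-1/z`; since its entries are positive, this
forces `-1/z > 1`, so `-1/z` has the purely periodic expansion `b.reverse`. By Serret's theorem
`-1/z` and `e₂` share a tail of their expansions, so `b.reverse` is a period of `e₂`. By symmetry
and minimality the two periods have the same length, and two periods of equal length are
rotations of each other.
-/

open Matrix

lemma Irrational.int_mul_add_int_eq_zero {x : ℝ} (hx : Irrational x) {a b : ℤ}
    (h : (a : ℝ) * x + b = 0) : a = 0 ∧ b = 0 := by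
  obtain rfl | ha := eq_or_ne a 0
  · exact ⟨rfl, by simpa using h⟩
  · exact absurd h ((hx.intCast_mul ha).add_intCast b).ne_zero

lemma quadratic_eq_mul_sub_mul_sub {K : Type*} [Field K] {a b c u v : K} (hne : u ≠ v)
    (hu : a * u ^ 2 + b * u + c = 0) (hv : a * v ^ 2 + b * v + c = 0) (t : K) :
    a * t ^ 2 + b * t + c = a * (t - u) * (t - v) := by
  have hb : b = -a * (u + v) := by
    have : (u - v) * (a * (u + v) + b) = 0 := by linear_combination hu - hv
    linear_combination (mul_eq_zero.1 this).resolve_left (sub_ne_zero.2 hne)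
  have hc : c = a * u * v := by linear_combination hu - u * hb
  rw [hb, hc]
  ring

lemma Irrational.quadratic_eq_zero_of_common_root {x : ℝ} (hx : Irrational x)
    {a b c a' b' c' : ℤ} (ha : a ≠ 0) (h : (a : ℝ) * x ^ 2 + b * x + c = 0)
    (h' : (a' : ℝ) * x ^ 2 + b' * x + c' = 0)
    {w : ℝ} (hw : (a : ℝ) * w ^ 2 + b * w + c = 0) : (a' : ℝ) * w ^ 2 + b' * w + c' = 0 := by
  have hlin : ((a' * b - a * b' : ℤ) : ℝ) * x + (a' * c - a * c' : ℤ) = 0 := by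
    push_cast
    linear_combination (a' : ℝ) * h - a * h'
  obtain ⟨hb, hc⟩ := hx.int_mul_add_int_eq_zero hlin
  have hb' : (a' : ℝ) * b = a * b' := by exact_mod_cast sub_eq_zero.1 hb
  have hc' : (a' : ℝ) * c = a * c' := by exact_mod_cast sub_eq_zero.1 hc
  have : (a : ℝ) * ((a' : ℝ) * w ^ 2 + b' * w + c') = 0 := by
    linear_combination (a' : ℝ) * hw - w * hb' - hc'
  exact (mul_eq_zero.1 this).resolve_left (by exact_mod_cast ha)

lemma cq_succ (x : ℝ) (n : ℕ) : cq x (n + 1) = (Int.fract (cq x n))⁻¹ := rfl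

lemma cq_add (x : ℝ) (m : ℕ) : ∀ n, cq (cq x m) n = cq x (m + n)
  | 0 => rfl
  | n + 1 => by rw [cq_succ, cq_add x m n]; rfl

lemma cfDigit_add (x : ℝ) (m n : ℕ) : cfDigit (cq x m) n = cfDigit x (m + n) := by
  rw [cfDigit, cq_add, cfDigit]

lemma Irrational.cq {x : ℝ} (hx : Irrational x) : ∀ n, Irrational (cq x n)
  | 0 => hx
  | n + 1 => ((hx.cq n).sub_intCast _).inv

lemma one_lt_cq {x : ℝ} (hx : Irrational x) (n : ℕ) : 1 < cq x (n + 1) :=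
  (one_lt_inv₀ (Int.fract_pos.2 ((hx.cq n).ne_int _))).2 (Int.fract_lt_one _)

lemma one_le_cfDigit {x : ℝ} (hx : Irrational x) (n : ℕ) : 1 ≤ cfDigit x (n + 1) :=
  Int.le_floor.2 (by exact_mod_cast (one_lt_cq hx n).le)

lemma cq_eq_cfDigit_add_inv (x : ℝ) (n : ℕ) :
    cq x n = cfDigit x n + (cq x (n + 1))⁻¹ := by
  rw [cq_succ, inv_inv, cfDigit, Int.floor_add_fract]

lemma GenContFract.of_s_get?_eq_cfDigit {x : ℝ} (hx : Irrational x) (n : ℕ) :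
    (GenContFract.of x).s.get? n = some ⟨1, cfDigit x (n + 1)⟩ := by
  induction n generalizing x with
  | zero => exact GenContFract.of_s_head (Int.fract_pos.2 (hx.ne_int _)).ne'
  | succ n ih =>
    rw [GenContFract.of_s_succ, show (Int.fract x)⁻¹ = cq x 1 from rfl, ih (hx.cq 1),
      cfDigit_add, Nat.add_comm]

lemma eq_of_cfDigit_eq {x y : ℝ} (hx : Irrational x) (hy : Irrational y)
    (h : ∀ n, cfDigit x n = cfDigit y n) : x = y := by
  have hof : GenContFract.of x = GenContFract.of y := by
    ext1
    · rw [GenContFract.of_h_eq_floor, GenContFract.of_h_eq_floor]; exact congrArg _ (h 0)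
    · ext1 n
      rw [GenContFract.of_s_get?_eq_cfDigit hx, GenContFract.of_s_get?_eq_cfDigit hy, h]
  exact tendsto_nhds_unique (GenContFract.of_convergence x) (hof ▸ GenContFract.of_convergence y)

noncomputable def moebius (g : Matrix (Fin 2) (Fin 2) ℤ) (x : ℝ) : ℝ :=
  (g 0 0 * x + g 0 1) / (g 1 0 * x + g 1 1)

section Moebius

variable {g h : Matrix (Fin 2) (Fin 2) ℤ} {x : ℝ}

lemma moebius_denom_ne_zero (hx : Irrational x) (hg : g.det ≠ 0) :
    (g 1 0 : ℝ) * x + g 1 1 ≠ 0 := by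
  intro h
  obtain ⟨h₀, h₁⟩ := hx.int_mul_add_int_eq_zero h
  exact hg (by simp [det_fin_two, h₀, h₁])

lemma moebius_mul (hx : (h 1 0 : ℝ) * x + h 1 1 ≠ 0) :
    moebius (g * h) x = moebius g (moebius h x) := by
  have key : ∀ i, (g i 0 : ℝ) * moebius h x + g i 1 =
      ((g * h) i 0 * x + (g * h) i 1) / (h 1 0 * x + h 1 1) := by
    intro i
    rw [eq_div_iff hx, moebius, add_mul, mul_assoc, div_mul_cancel₀ _ hx]
    simp only [mul_apply, Fin.sum_univ_two, Int.cast_add, Int.cast_mul]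
    ring
  rw [moebius, moebius, key, key, div_div_div_cancel_right₀ hx]

lemma moebius_mul_of_irrational (hx : Irrational x) (hh : h.det ≠ 0) :
    moebius (g * h) x = moebius g (moebius h x) :=
  moebius_mul (moebius_denom_ne_zero hx hh)

lemma moebius_smul_one {d : ℤ} (hd : d ≠ 0) : moebius (d • 1) x = x := by
  have : (d : ℝ) ≠ 0 := by exact_mod_cast hd
  simp [moebius, this]

lemma moebius_adjugate_moebius (hx : Irrational x) (hg : g.det ≠ 0) :
    moebius g.adjugate (moebius g x) = x := by
  rw [← moebius_mul_of_irrational hx hg, adjugate_mul, moebius_smul_one hg]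

lemma moebius_moebius_adjugate (hx : Irrational x) (hg : g.det ≠ 0) :
    moebius g (moebius g.adjugate x) = x := by
  rw [← moebius_mul_of_irrational hx (by simpa [det_adjugate] using hg), mul_adjugate,
    moebius_smul_one hg]

lemma Irrational.moebius (hx : Irrational x) (hg : g.det ≠ 0) : Irrational (moebius g x) := by
  rintro ⟨q, hq⟩
  apply hx
  refine ⟨(g.adjugate 0 0 * q + g.adjugate 0 1) / (g.adjugate 1 0 * q + g.adjugate 1 1), ?_⟩
  push_cast
  rw [hq]
  exact moebius_adjugate_moebius hx hg

lemma moebius_eq_self_iff (hx : Irrational x) (hg : g.det ≠ 0) :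
    moebius g x = x ↔ (g 1 0 : ℝ) * x ^ 2 + (g 1 1 - g 0 0) * x - g 0 1 = 0 := by
  rw [moebius, div_eq_iff (moebius_denom_ne_zero hx hg)]
  constructor <;> intro h <;> linear_combination -h

end Moebius

def digitMatrix (a : ℤ) : Matrix (Fin 2) (Fin 2) ℤ := !![a, 1; 1, 0]

def wordMatrix (w : List ℤ) : Matrix (Fin 2) (Fin 2) ℤ := (w.map digitMatrix).prod

section WordMatrix

variable {a : ℤ} {w : List ℤ} {t : ℝ}

@[simp] lemma wordMatrix_nil : wordMatrix [] = 1 := rfl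

lemma wordMatrix_cons : wordMatrix (a :: w) = digitMatrix a * wordMatrix w := rfl

lemma wordMatrix_append_singleton : wordMatrix (w ++ [a]) = wordMatrix w * digitMatrix a := by
  simp [wordMatrix]

lemma det_digitMatrix (a : ℤ) : (digitMatrix a).det = -1 := by
  simp [digitMatrix, det_fin_two_of]

lemma det_wordMatrix (w : List ℤ) : (wordMatrix w).det = (-1) ^ w.length := by
  induction w with
  | nil => simp
  | cons a w ih => rw [wordMatrix_cons, det_mul, det_digitMatrix, ih, List.length_cons, pow_succ']

lemma det_wordMatrix_ne_zero (w : List ℤ) : (wordMatrix w).det ≠ 0 := by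
  simp [det_wordMatrix]

lemma wordMatrix_reverse (w : List ℤ) : wordMatrix w.reverse = (wordMatrix w)ᵀ := by
  induction w with
  | nil => simp
  | cons a w ih =>
    rw [List.reverse_cons, wordMatrix_append_singleton, ih, wordMatrix_cons, transpose_mul]
    congr 1
    ext i j
    fin_cases i <;> fin_cases j <;> rfl

lemma moebius_digitMatrix (ht : t ≠ 0) : moebius (digitMatrix a) t = a + t⁻¹ := by
  simp only [moebius, digitMatrix, of_apply, cons_val', cons_val_zero, cons_val_one,
    cons_val_fin_one, Int.cast_one, Int.cast_zero, one_mul, add_zero]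
  field_simp

lemma moebius_wordMatrix_cons (ht : Irrational t) :
    moebius (wordMatrix (a :: w)) t = a + (moebius (wordMatrix w) t)⁻¹ := by
  rw [wordMatrix_cons, moebius_mul_of_irrational ht (det_wordMatrix_ne_zero w),
    moebius_digitMatrix (ht.moebius (det_wordMatrix_ne_zero w)).ne_zero]

lemma wordMatrix_cons_pos (hw : ∀ b ∈ a :: w, 1 ≤ b) :
    let W := wordMatrix (a :: w)
    0 < W 0 0 ∧ 0 < W 1 0 ∧ 0 < W 1 0 + W 1 1 ∧ W 1 0 + W 1 1 < W 0 0 + W 0 1 := by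
  induction w generalizing a with
  | nil =>
    have := hw a List.mem_cons_self
    simp only [wordMatrix_cons, wordMatrix_nil, mul_one, digitMatrix, of_apply, cons_val',
      cons_val_zero, cons_val_one, cons_val_fin_one, empty_val']
    omega
  | cons b w ih =>
    obtain ⟨h₀, h₁, h₂, h₃⟩ := ih fun c hc => hw c (List.mem_cons_of_mem a hc)
    have ha := hw a List.mem_cons_self
    rw [wordMatrix_cons]
    simp only [digitMatrix, mul_apply, Fin.sum_univ_two, of_apply, cons_val', cons_val_zero,
      cons_val_one, empty_val', cons_val_fin_one]
    refine ⟨by nlinarith, by omega, by omega, by nlinarith⟩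

/-- The fixed-point quadratic of `wordMatrix w` is negative at `1`, so `1` separates its roots. -/
lemma one_lt_of_moebius_wordMatrix_eq_self (hw : ∀ b ∈ w, 1 ≤ b) (hne : w ≠ [])
    {u v : ℝ} (hu : Irrational u) (hv : Irrational v) (huv : u ≠ v)
    (hfu : moebius (wordMatrix w) u = u) (hfv : moebius (wordMatrix w) v = v) (hv1 : v < 1) :
    1 < u := by
  obtain ⟨a, w, rfl⟩ := List.exists_cons_of_ne_nil hne
  obtain ⟨-, h₁, -, h₃⟩ := wordMatrix_cons_pos hw
  set W := wordMatrix (a :: w)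
  rw [moebius_eq_self_iff hu (det_wordMatrix_ne_zero _), sub_eq_add_neg] at hfu
  rw [moebius_eq_self_iff hv (det_wordMatrix_ne_zero _), sub_eq_add_neg] at hfv
  have h1 := quadratic_eq_mul_sub_mul_sub huv hfu hfv 1
  have hW10 : (0 : ℝ) < W 1 0 := by exact_mod_cast h₁
  have hsum : (W 1 0 : ℝ) + W 1 1 < W 0 0 + W 0 1 := by exact_mod_cast h₃
  nlinarith [mul_pos hW10 (sub_pos.2 hv1)]

end WordMatrix

section Digits

variable {a : ℤ} {w : List ℤ} {s t : ℝ}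

lemma floor_intCast_add_inv (hs : 1 < s) : ⌊(a : ℝ) + s⁻¹⌋ = a := by
  rw [Int.floor_intCast_add,
    Int.floor_eq_zero_iff.2 ⟨by positivity, (inv_lt_one₀ (by linarith)).2 hs⟩, add_zero]

lemma cq_intCast_add_inv_one (hs : 1 < s) : cq (a + s⁻¹) 1 = s := by
  rw [cq_succ, cq, Int.fract_intCast_add,
    Int.fract_eq_self.2 ⟨by positivity, (inv_lt_one₀ (by linarith)).2 hs⟩, inv_inv]

lemma one_lt_moebius_wordMatrix (hw : ∀ b ∈ w, 1 ≤ b) (ht : 1 < t) (hti : Irrational t) :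
    1 < moebius (wordMatrix w) t := by
  induction w with
  | nil => simpa [moebius]
  | cons a w ih =>
    rw [moebius_wordMatrix_cons hti]
    have ha : (1 : ℝ) ≤ a := by exact_mod_cast hw a List.mem_cons_self
    have := ih fun b hb => hw b (List.mem_cons_of_mem a hb)
    have : 0 < (moebius (wordMatrix w) t)⁻¹ := by positivity
    linarith

lemma cq_moebius_wordMatrix_length (hw : ∀ b ∈ w, 1 ≤ b) (ht : 1 < t) (hti : Irrational t) :
    cq (moebius (wordMatrix w) t) w.length = t := by
  induction w with
  | nil => simp [moebius, cq]
  | cons a w ih =>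
    have hw' : ∀ b ∈ w, 1 ≤ b := fun b hb => hw b (List.mem_cons_of_mem a hb)
    rw [List.length_cons, Nat.add_comm, ← cq_add, moebius_wordMatrix_cons hti,
      cq_intCast_add_inv_one (one_lt_moebius_wordMatrix hw' ht hti), ih hw']

lemma cfDigit_moebius_wordMatrix (hw : ∀ b ∈ w, 1 ≤ b) (ht : 1 < t) (hti : Irrational t) :
    ∀ j < w.length, cfDigit (moebius (wordMatrix w) t) j = w.getD j 0 := by
  induction w with
  | nil => simp
  | cons a w ih =>
    have hw' : ∀ b ∈ w, 1 ≤ b := fun b hb => hw b (List.mem_cons_of_mem a hb)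
    have hgt := one_lt_moebius_wordMatrix hw' ht hti
    rintro (_ | j) hj
    · rw [cfDigit, cq, moebius_wordMatrix_cons hti, floor_intCast_add_inv hgt]
      rfl
    · rw [← Nat.add_comm 1, ← cfDigit_add, moebius_wordMatrix_cons hti,
        cq_intCast_add_inv_one hgt, ih hw' j (by simpa using hj), Nat.add_comm]
      rfl

lemma isCFPeriod_of_moebius_wordMatrix_eq_self (hw : ∀ b ∈ w, 1 ≤ b) (ht : 1 < t)
    (hti : Irrational t) (hne : w ≠ []) (hfix : moebius (wordMatrix w) t = t) :
    IsCFPeriod t w := by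
  have hper : Function.Periodic (cfDigit t) w.length := fun i => by
    conv_lhs => rw [Nat.add_comm, ← cfDigit_add, ← hfix, cq_moebius_wordMatrix_length hw ht hti]
  refine ⟨hne, 0, fun i => ?_⟩
  rw [Nat.zero_add, ← hper.map_mod_nat, ← cfDigit_moebius_wordMatrix hw ht hti _
    (Nat.mod_lt _ (List.length_pos_iff.2 hne)), hfix]

end Digits

lemma moebius_wordMatrix_cfDigits_cq {x : ℝ} (hx : Irrational x) (n : ℕ) :
    moebius (wordMatrix ((List.range n).map (cfDigit x))) (cq x n) = x := by
  induction n with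
  | zero => simp [moebius, cq]
  | succ n ih =>
    rw [List.range_succ, List.map_append, List.map_singleton, wordMatrix_append_singleton,
      moebius_mul_of_irrational (hx.cq _) (by simp [det_digitMatrix]),
      moebius_digitMatrix (hx.cq _).ne_zero, ← cq_eq_cfDigit_add_inv, ih]

lemma moebius_wordMatrix_cq_eq_self {x : ℝ} (hx : Irrational x) {b : List ℤ} {N : ℕ}
    (hb : ∀ i, cfDigit x (N + i) = b.getD (i % b.length) 0) :
    moebius (wordMatrix b) (cq x N) = cq x N := by
  have hy : ∀ i, cfDigit (cq x N) i = b.getD (i % b.length) 0 := fun i => by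
    rw [cfDigit_add, hb]
  have hprefix : (List.range b.length).map (cfDigit (cq x N)) = b :=
    List.ext_getElem (by simp) fun j _ hj => by
      rw [List.getElem_map, List.getElem_range, hy, Nat.mod_eq_of_lt hj, List.getD_eq_getElem]
  have htail : cq (cq x N) b.length = cq x N :=
    eq_of_cfDigit_eq ((hx.cq N).cq _) (hx.cq N) fun i => by
      rw [cfDigit_add, hy, hy, Nat.add_mod_left]
  conv_rhs => rw [← moebius_wordMatrix_cfDigits_cq (hx.cq N) b.length, hprefix, htail]

def TailEquiv (x y : ℝ) : Prop := ∃ m n, cq x m = cq y n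

namespace TailEquiv

lemma refl (x : ℝ) : TailEquiv x x := ⟨0, 0, rfl⟩

lemma symm {x y : ℝ} : TailEquiv x y → TailEquiv y x
  | ⟨m, n, h⟩ => ⟨n, m, h.symm⟩

lemma trans {x y z : ℝ} : TailEquiv x y → TailEquiv y z → TailEquiv x z
  | ⟨m, n, h₁⟩, ⟨n', l, h₂⟩ => ⟨m + n', l + n, by
      rw [← cq_add, h₁, cq_add, Nat.add_comm, ← cq_add, h₂, cq_add]⟩

instance : Trans TailEquiv TailEquiv TailEquiv := ⟨trans⟩

end TailEquiv

lemma tailEquiv_intCast_add (a : ℤ) (x : ℝ) : TailEquiv (a + x) x :=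
  ⟨1, 1, by rw [cq_succ, cq_succ, cq, cq, Int.fract_intCast_add]⟩

lemma tailEquiv_inv_of_pos {x : ℝ} (hx : 0 < x) : TailEquiv x⁻¹ x := by
  have key : ∀ {y : ℝ}, 0 < y → y < 1 → cq y 1 = y⁻¹ := fun hy₀ hy₁ => by
    rw [cq_succ, cq, Int.fract_eq_self.2 ⟨hy₀.le, hy₁⟩]
  rcases lt_trichotomy x 1 with hx₁ | rfl | hx₁
  · exact ⟨0, 1, (key hx hx₁).symm⟩
  · rw [inv_one]; exact .refl 1
  · exact ⟨1, 0, by rw [key (inv_pos.2 hx) (inv_lt_one_of_one_lt₀ hx₁), inv_inv]; rfl⟩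

lemma tailEquiv_neg (x : ℝ) : TailEquiv (-x) x := by
  set f := Int.fract x
  obtain hf | hf := (Int.fract_nonneg x).eq_or_lt
  · exact ⟨1, 1, by rw [cq_succ, cq_succ, cq, cq, ← hf, Int.fract_neg_eq_zero.2 hf.symm]⟩
  have hf₁ : f < 1 := Int.fract_lt_one x
  calc -x = ((-⌊x⌋ - 1 : ℤ) : ℝ) + (1 - f) := by
        push_cast; linarith [Int.floor_add_fract x]
    TailEquiv _ (1 - f) := tailEquiv_intCast_add _ _
    TailEquiv _ ((1 - f)⁻¹) := (tailEquiv_inv_of_pos (by linarith)).symm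
    _ = (1 : ℤ) + (f⁻¹ - 1)⁻¹ := by
        have : 1 - f ≠ 0 := by linarith
        have : f ≠ 0 := hf.ne'
        rw [Int.cast_one, show f⁻¹ - 1 = (1 - f) / f by field_simp, inv_div]
        field_simp
        ring
    TailEquiv _ ((f⁻¹ - 1)⁻¹) := tailEquiv_intCast_add _ _
    TailEquiv _ (f⁻¹ - 1) := tailEquiv_inv_of_pos (sub_pos.2 ((one_lt_inv₀ hf).2 hf₁))
    _ = ((-1 : ℤ) : ℝ) + f⁻¹ := by push_cast; ring
    TailEquiv _ (f⁻¹) := tailEquiv_intCast_add _ _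
    TailEquiv _ f := tailEquiv_inv_of_pos hf
    TailEquiv _ (⌊x⌋ + f) := (tailEquiv_intCast_add _ _).symm
    _ = x := Int.floor_add_fract x

lemma tailEquiv_inv (x : ℝ) : TailEquiv x⁻¹ x := by
  rcases lt_trichotomy x 0 with hx | rfl | hx
  · calc x⁻¹ = -(-x)⁻¹ := by rw [inv_neg, neg_neg]
      TailEquiv _ ((-x)⁻¹) := tailEquiv_neg _
      TailEquiv _ (-x) := tailEquiv_inv_of_pos (neg_pos.2 hx)
      TailEquiv _ x := tailEquiv_neg x
  · simpa using TailEquiv.refl 0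
  · exact tailEquiv_inv_of_pos hx

lemma tailEquiv_moebius_of_upper_triangular {g : Matrix (Fin 2) (Fin 2) ℤ} (hg10 : g 1 0 = 0)
    (hg : g.det = 1 ∨ g.det = -1) (x : ℝ) : TailEquiv (moebius g x) x := by
  have hunit : IsUnit (g 0 0 * g 1 1) := by
    rw [det_fin_two, hg10, mul_zero, sub_zero] at hg
    rcases hg with h | h <;> simp [h]
  have hadd (c : ℤ) : TailEquiv (c + x) x := tailEquiv_intCast_add c x
  have hsub (c : ℤ) : TailEquiv (c + -x) x := (tailEquiv_intCast_add c _).trans (tailEquiv_neg x)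
  rcases Int.isUnit_iff.1 (isUnit_of_mul_isUnit_left hunit) with h₀ | h₀ <;>
  rcases Int.isUnit_iff.1 (isUnit_of_mul_isUnit_right hunit) with h₁ | h₁ <;>
  simp only [moebius, h₀, h₁, hg10]
  · convert hadd (g 0 1) using 1; push_cast; ring
  · convert hsub (-g 0 1) using 1; push_cast; ring
  · convert hsub (g 0 1) using 1; push_cast; ring
  · convert hadd (-g 0 1) using 1; push_cast; ring

/-- Serret's theorem. The induction is Euclid's algorithm on the bottom row of `g`:
`g = digitMatrix (g 0 0 / g 1 0) * W` with `|W 1 0| < |g 1 0|`. -/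
theorem tailEquiv_moebius {g : Matrix (Fin 2) (Fin 2) ℤ} (hg : g.det = 1 ∨ g.det = -1) {x : ℝ}
    (hx : Irrational x) : TailEquiv (moebius g x) x := by
  induction hn : (g 1 0).natAbs using Nat.strong_induction_on generalizing g with
  | _ n ih =>
  obtain hg10 | hg10 := eq_or_ne (g 1 0) 0
  · exact tailEquiv_moebius_of_upper_triangular hg10 hg x
  set e := g 0 0 / g 1 0
  set W : Matrix (Fin 2) (Fin 2) ℤ := !![g 1 0, g 1 1; g 0 0 % g 1 0, g 0 1 - e * g 1 1]
  have hgW : g = digitMatrix e * W := by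
    ext i j
    fin_cases i <;> fin_cases j <;>
      simp [W, digitMatrix, mul_apply, Fin.sum_univ_two, e, Int.ediv_mul_add_emod]
  have hW : W.det = -g.det := by
    rw [hgW, det_mul, det_digitMatrix, neg_one_mul, neg_neg]
  have hWdet : W.det = 1 ∨ W.det = -1 := by rw [hW]; rcases hg with h | h <;> simp [h]
  have hWlt : (W 1 0).natAbs < n := by
    rw [← hn]
    have := Int.abs_eq_natAbs (g 1 0) ▸ Int.emod_lt_abs (g 0 0) hg10
    have := Int.emod_nonneg (g 0 0) hg10
    simp only [W, of_apply, cons_val', cons_val_one, cons_val_zero, empty_val',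
      cons_val_fin_one]
    omega
  have hWx : Irrational (moebius W x) := hx.moebius (by rcases hWdet with h | h <;> simp [h])
  calc moebius g x = e + (moebius W x)⁻¹ := by
        rw [hgW, moebius_mul_of_irrational hx (by rcases hWdet with h | h <;> simp [h]),
          moebius_digitMatrix hWx.ne_zero]
    TailEquiv _ ((moebius W x)⁻¹) := tailEquiv_intCast_add _ _
    TailEquiv _ (moebius W x) := tailEquiv_inv _
    TailEquiv _ x := ih _ hWlt hWdet rfl

namespace IsCFPeriod

variable {x y : ℝ} {b c : List ℤ}

lemma exists_pos_start (hb : IsCFPeriod x b) :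
    ∃ N, 0 < N ∧ ∀ i, cfDigit x (N + i) = b.getD (i % b.length) 0 := by
  obtain ⟨hne, N, hN⟩ := hb
  refine ⟨N + b.length, Nat.add_pos_right _ (List.length_pos_iff.2 hne), fun i => ?_⟩
  rw [Nat.add_assoc, hN, Nat.add_mod_left]

lemma one_le (hx : Irrational x) (hb : IsCFPeriod x b) : ∀ a ∈ b, 1 ≤ a := by
  obtain ⟨N, hN0, hN⟩ := hb.exists_pos_start
  intro a ha
  obtain ⟨j, hj, rfl⟩ := List.getElem_of_mem ha
  obtain ⟨M, rfl⟩ := Nat.exists_eq_add_of_lt hN0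
  have := hN j
  rw [Nat.mod_eq_of_lt hj, List.getD_eq_getElem _ _ hj, Nat.zero_add, Nat.add_right_comm] at this
  exact this ▸ one_le_cfDigit hx _

lemma of_tailEquiv (hxy : TailEquiv x y) (hb : IsCFPeriod x b) : IsCFPeriod y b := by
  obtain ⟨m, n, hmn⟩ := hxy
  obtain ⟨hne, N, hN⟩ := hb
  obtain ⟨k, hk⟩ := Nat.exists_eq_add_one_of_ne_zero (List.length_pos_iff.2 hne).ne'
  refine ⟨hne, n + (N + m * k), fun i => ?_⟩
  rw [Nat.add_assoc, ← cfDigit_add, ← hmn, cfDigit_add,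
    show m + (N + m * k + i) = N + (i + b.length * m) by rw [hk]; ring, hN,
    Nat.add_mul_mod_self_left]

lemma eq_rotate_of_length_eq (hb : IsCFPeriod x b) (hc : IsCFPeriod x c)
    (hlen : b.length = c.length) : ∃ t, b = c.rotate t := by
  obtain ⟨hne, N₁, h₁⟩ := hb
  obtain ⟨-, N₂, h₂⟩ := hc
  obtain ⟨k, hk⟩ := Nat.exists_eq_add_one_of_ne_zero (List.length_pos_iff.2 hne).ne'
  refine ⟨N₁ + N₂ * k, List.ext_getElem (by simp [hlen]) fun j hj _ => ?_⟩
  have := h₁ (j + b.length * N₂)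
  rw [Nat.add_mul_mod_self_left, Nat.mod_eq_of_lt hj, List.getD_eq_getElem _ _ hj,
    show N₁ + (j + b.length * N₂) = N₂ + (j + (N₁ + N₂ * k)) by rw [hk]; ring, h₂] at this
  rw [← this, List.getElem_rotate, List.getD_eq_getElem]

end IsCFPeriod

section Conjugation

variable {A C : Matrix (Fin 2) (Fin 2) ℤ} {x : ℝ}

lemma moebius_conj (hx : Irrational x) (hC : C.det ≠ 0) (hA : A.det ≠ 0) :
    moebius (C * A * C.adjugate) x = moebius C (moebius A (moebius C.adjugate x)) := by
  have hx' : Irrational (moebius C.adjugate x) := hx.moebius (by simpa [det_adjugate] using hC)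
  rw [moebius_mul_of_irrational hx (by simpa [det_adjugate] using hC),
    moebius_mul_of_irrational hx' hA]

lemma moebius_transpose_neg_inv (hx : Irrational x) (hA : A.det ≠ 0) (h : moebius A x = x) :
    moebius Aᵀ (-x⁻¹) = -x⁻¹ := by
  rw [moebius_eq_self_iff hx hA] at h
  rw [moebius_eq_self_iff hx.inv.neg (by rwa [det_transpose])]
  simp only [transpose_apply]
  have hx0 := hx.ne_zero
  field_simp
  linear_combination -h

end Conjugation

lemma moebius_adjugate_conjugate_eq_self {p q r : ℤ} (hp : p ≠ 0) {e₁ e₂ y : ℝ}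
    (h₁ : Irrational e₁) (h₂ : Irrational e₂) (hy : Irrational y)
    (he₁ : (p : ℝ) * e₁ ^ 2 + q * e₁ + r = 0) (he₂ : (p : ℝ) * e₂ ^ 2 + q * e₂ + r = 0)
    {A C : Matrix (Fin 2) (Fin 2) ℤ} (hA : A.det ≠ 0) (hC : C.det ≠ 0)
    (hAy : moebius A y = y) (hCy : moebius C y = e₁) :
    moebius A (moebius C.adjugate e₂) = moebius C.adjugate e₂ := by
  have hG : (C * A * C.adjugate).det ≠ 0 := by simp [det_adjugate, hA, hC]
  have hGe₁ : moebius (C * A * C.adjugate) e₁ = e₁ := by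
    rw [moebius_conj h₁ hC hA, ← hCy, moebius_adjugate_moebius hy hC, hAy]
  -- an integer quadratic vanishing at the irrational `e₁` is proportional to `p t² + q t + r`
  have hGe₂ : moebius (C * A * C.adjugate) e₂ = e₂ := by
    rw [moebius_eq_self_iff h₁ hG, sub_eq_add_neg] at hGe₁
    rw [moebius_eq_self_iff h₂ hG, sub_eq_add_neg]
    exact_mod_cast h₁.quadratic_eq_zero_of_common_root hp he₁ (by exact_mod_cast hGe₁) he₂
  have hz : Irrational (moebius C.adjugate e₂) := h₂.moebius (by simpa [det_adjugate] using hC)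
  rw [← moebius_adjugate_moebius (hz.moebius hA) hC, ← moebius_conj h₂ hC hA, hGe₂]

theorem isCFPeriod_reverse_of_conjugate {p q r : ℤ} (hp : p ≠ 0) {e₁ e₂ : ℝ}
    (h₁ : Irrational e₁) (h₂ : Irrational e₂) (hne : e₁ ≠ e₂)
    (he₁ : (p : ℝ) * e₁ ^ 2 + q * e₁ + r = 0) (he₂ : (p : ℝ) * e₂ ^ 2 + q * e₂ + r = 0)
    {b : List ℤ} (hb : IsCFPeriod e₁ b) : IsCFPeriod e₂ b.reverse := by
  obtain ⟨N, hN0, hN⟩ := hb.exists_pos_start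
  set y := cq e₁ N
  set A := wordMatrix b
  set C := wordMatrix ((List.range N).map (cfDigit e₁))
  have hy : Irrational y := h₁.cq N
  have hy1 : 1 < y := by obtain ⟨M, rfl⟩ := Nat.exists_eq_add_of_lt hN0; exact one_lt_cq h₁ _
  have hA : A.det ≠ 0 := det_wordMatrix_ne_zero b
  have hC : C.det ≠ 0 := det_wordMatrix_ne_zero _
  have hAy : moebius A y = y := moebius_wordMatrix_cq_eq_self h₁ hN
  have hCy : moebius C y = e₁ := moebius_wordMatrix_cfDigits_cq h₁ N
  set z := moebius C.adjugate e₂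
  have hz : Irrational z := h₂.moebius (by simpa [det_adjugate] using hC)
  have hAz : moebius A z = z :=
    moebius_adjugate_conjugate_eq_self hp h₁ h₂ hy he₁ he₂ hA hC hAy hCy
  have hzy : z ≠ y := fun h => hne <| by rw [← hCy, ← h, moebius_moebius_adjugate h₂ hC]
  have hb₁ : ∀ a ∈ b.reverse, 1 ≤ a := fun a ha => hb.one_le h₁ a (List.mem_reverse.1 ha)
  have hbne : b.reverse ≠ [] := by simpa using hb.1
  have hfix : ∀ {t}, Irrational t → moebius A t = t →
      moebius (wordMatrix b.reverse) (-t⁻¹) = -t⁻¹ := fun ht hAt => by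
    rw [wordMatrix_reverse]; exact moebius_transpose_neg_inv ht hA hAt
  have hu : 1 < -z⁻¹ :=
    one_lt_of_moebius_wordMatrix_eq_self hb₁ hbne hz.inv.neg hy.inv.neg
      (by simpa using hzy) (hfix hz hAz) (hfix hy hAy)
      (by linarith [inv_pos.2 (zero_lt_one.trans hy1)])
  have hdet : C.adjugate.det = 1 ∨ C.adjugate.det = -1 := by
    simpa [det_adjugate, C, det_wordMatrix] using neg_one_pow_eq_or ℤ N
  refine (isCFPeriod_of_moebius_wordMatrix_eq_self hb₁ hu hz.inv.neg hbne
    (hfix hz hAz)).of_tailEquiv ?_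
  calc TailEquiv (-z⁻¹) z⁻¹ := tailEquiv_neg _
    TailEquiv _ z := tailEquiv_inv z
    TailEquiv _ e₂ := tailEquiv_moebius hdet h₂

lemma eigenvector_slope_quadratic {M : Matrix (Fin 2) (Fin 2) ℤ} {e l : ℝ}
    (hv : (M.map (Int.cast : ℤ → ℝ)).mulVec ![1, e] = l • ![1, e]) :
    (M 0 1 : ℝ) * e ^ 2 + ((M 0 0 - M 1 1 : ℤ) : ℝ) * e + ((-M 1 0 : ℤ) : ℝ) = 0 := by
  have h₀ := congrFun hv 0
  have h₁ := congrFun hv 1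
  simp only [mulVec, dotProduct, map_apply, Fin.sum_univ_two, cons_val_zero, cons_val_one,
    cons_val_fin_one, mul_one, Pi.smul_apply, smul_eq_mul] at h₀ h₁
  push_cast
  linear_combination e * h₀ - h₁

lemma upperRight_ne_zero_of_hyperbolic {M : Matrix (Fin 2) (Fin 2) ℤ} (hdet : M.det = 1)
    (htr : 2 < |M.trace|) {e : ℝ} (he : Irrational e)
    (hq : (M 0 1 : ℝ) * e ^ 2 + ((M 0 0 - M 1 1 : ℤ) : ℝ) * e + ((-M 1 0 : ℤ) : ℝ) = 0) :
    M 0 1 ≠ 0 := by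
  intro h
  obtain ⟨hd, -⟩ := he.int_mul_add_int_eq_zero (a := M 0 0 - M 1 1) (b := -M 1 0)
    (by simpa [h] using hq)
  have hM : M 0 0 = M 1 1 := sub_eq_zero.1 hd
  rw [det_fin_two, h, zero_mul, sub_zero, hM] at hdet
  rw [trace_fin_two, hM] at htr
  rcases Int.eq_one_or_neg_one_of_mul_eq_one hdet with h₁ | h₁ <;>
    simp [h₁] at htr

/-- For a hyperbolic M ∈ SL(2,ℤ) with irrational eigenvector slopes e₁, e₂,
the minimal period of the continued fraction of e₁ is, as a cyclic sequence,
the reverse of that of e₂. -/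
theorem eigenvector_slopes_periods_reversed
    (M : Matrix (Fin 2) (Fin 2) ℤ) (hdet : M.det = 1) (htr : |M.trace| > 2)
    (e₁ e₂ : ℝ) (h1 : Irrational e₁) (h2 : Irrational e₂) (hne : e₁ ≠ e₂)
    (l₁ l₂ : ℝ)
    (hv1 : (M.map (Int.cast : ℤ → ℝ)).mulVec ![1, e₁] = l₁ • ![1, e₁])
    (hv2 : (M.map (Int.cast : ℤ → ℝ)).mulVec ![1, e₂] = l₂ • ![1, e₂])
    (b₁ b₂ : List ℤ) (hb₁ : IsMinCFPeriod e₁ b₁) (hb₂ : IsMinCFPeriod e₂ b₂) :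
    ∃ k : ℕ, b₁.reverse = b₂.rotate k := by
  have hq₁ := eigenvector_slope_quadratic hv1
  have hq₂ := eigenvector_slope_quadratic hv2
  have hp := upperRight_ne_zero_of_hyperbolic hdet htr h1 hq₁
  have h₁₂ := isCFPeriod_reverse_of_conjugate hp h1 h2 hne hq₁ hq₂ hb₁.1
  have h₂₁ := isCFPeriod_reverse_of_conjugate hp h2 h1 hne.symm hq₂ hq₁ hb₂.1
  have hlen : b₁.length = b₂.length :=
    le_antisymm (by simpa using hb₁.2 _ h₂₁) (by simpa using hb₂.2 _ h₁₂)
  exact h₁₂.eq_rotate_of_length_eq hb₂.1 (by simpa using hlen)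
end

section
/- Let x₁ and x₂ be the two real irrational roots of x² + px + q = 0 with p, q ∈ ℤ. Then the minimal periods of the continued fraction expansions of x₁ and x₂ are equal as cyclic sequences. -/
lemma List.getD_rotate_mod {α : Type*} (l : List α) (n i : ℕ) (d : α) :
    (l.rotate n).getD (i % l.length) d = l.getD ((i + n) % l.length) d := by
  obtain hl | hl := l.length.eq_zero_or_pos
  · simp [List.length_eq_zero_iff.mp hl]
  · rw [List.getD_eq_getElem _ _ (by simpa using Nat.mod_lt i hl), List.getElem_rotate,
      List.getD_eq_getElem _ _ (Nat.mod_lt _ hl)]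
    simp only [Nat.mod_add_mod]

lemma cq_add_eq_of_eq {x y : ℝ} {m n : ℕ} (h : cq x m = cq y n) (i : ℕ) :
    cq x (m + i) = cq y (n + i) := by
  induction i with
  | zero => exact h
  | succ i ih => exact congrArg (fun t => (Int.fract t)⁻¹) ih

lemma cq_add_intCast_succ (x : ℝ) (k : ℤ) (n : ℕ) : cq (x + k) (n + 1) = cq x (n + 1) := by
  have h : cq (x + k) 1 = cq x 1 := congrArg Inv.inv (Int.fract_add_intCast x k)
  simpa only [Nat.add_comm 1] using cq_add_eq_of_eq h n

lemma cq_neg_three_eq_cq_two {x : ℝ} (h0 : 0 < Int.fract x) (h : Int.fract x < 1 / 2) :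
    cq (-x) 3 = cq x 2 := by
  set f := Int.fract x
  have hf : 0 < 1 - f := by linarith
  have hfract : Int.fract (1 - f)⁻¹ = f / (1 - f) := by
    refine Int.fract_eq_iff.mpr ⟨by positivity, (div_lt_one hf).mpr (by linarith), 1, ?_⟩
    field_simp
    ring
  have hinv : (f / (1 - f))⁻¹ = f⁻¹ + ((-1 : ℤ) : ℝ) := by
    field_simp
    push_cast
    ring
  show (Int.fract (Int.fract (Int.fract (-x))⁻¹)⁻¹)⁻¹ = (Int.fract (Int.fract x)⁻¹)⁻¹
  rw [Int.fract_neg h0.ne', hfract, hinv, Int.fract_add_intCast]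

lemma exists_cq_neg_succ_eq {x : ℝ} (hx : Irrational x) :
    ∃ m n : ℕ, cq (-x) (m + 1) = cq x n := by
  have hf : Irrational (Int.fract x) := by
    simpa only [Int.self_sub_floor] using hx.sub_intCast ⌊x⌋
  have h0 : 0 < Int.fract x := (Int.fract_nonneg x).lt_of_ne' hf.ne_zero
  have hhalf : Int.fract x ≠ 1 / 2 := by
    simpa using hf.ne_rat (1 / 2)
  have hneg : Int.fract (-x) = 1 - Int.fract x := Int.fract_neg h0.ne'
  rcases hhalf.lt_or_gt with hlt | hgt
  · exact ⟨2, 2, cq_neg_three_eq_cq_two h0 hlt⟩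
  · have h := cq_neg_three_eq_cq_two (x := -x) (by linarith [Int.fract_lt_one x])
      (by linarith)
    rw [neg_neg] at h
    exact ⟨1, 3, h.symm⟩

lemma exists_cq_eq_of_add_eq_intCast {x y : ℝ} {k : ℤ} (hx : Irrational x) (hxy : x + y = k) :
    ∃ m n : ℕ, cq y m = cq x n := by
  obtain ⟨m, n, h⟩ := exists_cq_neg_succ_eq hx
  refine ⟨m + 1, n, ?_⟩
  rw [show y = -x + k by linarith, cq_add_intCast_succ, h]

lemma cfDigit_add_add_eq_getD_rotate {x : ℝ} {b : List ℤ} {N : ℕ}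
    (hN : ∀ i, cfDigit x (N + i) = b.getD (i % b.length) 0) (k i : ℕ) :
    cfDigit x (N + k + i) = (b.rotate k).getD (i % (b.rotate k).length) 0 := by
  rw [List.length_rotate, List.getD_rotate_mod, add_assoc, hN, Nat.add_comm k i]

namespace IsCFPeriod

variable {x y : ℝ} {b c : List ℤ}

lemma rotate_of_cq_eq {m n : ℕ} (hb : IsCFPeriod x b) (h : cq y m = cq x n) :
    IsCFPeriod y (b.rotate n) := by
  obtain ⟨hne, N, hN⟩ := hb
  refine ⟨by simpa using hne, m + N, fun i => ?_⟩
  have htail : cfDigit y (m + N + i) = cfDigit x (N + n + i) := by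
    rw [add_assoc, add_comm N n, add_assoc]
    exact congrArg Int.floor (cq_add_eq_of_eq h (N + i))
  rw [htail, cfDigit_add_add_eq_getD_rotate hN]

lemma exists_eq_rotate_of_length_eq (hb : IsCFPeriod x b) (hc : IsCFPeriod x c)
    (hlen : b.length = c.length) : ∃ k : ℕ, b = c.rotate k := by
  obtain ⟨-, N₁, h₁⟩ := hb
  obtain ⟨-, N₂, h₂⟩ := hc
  have hrot : b.rotate N₂ = c.rotate N₁ := by
    refine List.ext_getElem (by simp [hlen]) fun i hib hic => ?_
    have hdigit := (cfDigit_add_add_eq_getD_rotate h₁ N₂ i).symm.trans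
      ((add_comm N₁ N₂).symm ▸ cfDigit_add_add_eq_getD_rotate h₂ N₁ i)
    rwa [Nat.mod_eq_of_lt hib, Nat.mod_eq_of_lt hic, List.getD_eq_getElem _ _ hib,
      List.getD_eq_getElem _ _ hic] at hdigit
  rw [List.rotate_eq_iff, List.rotate_rotate] at hrot
  exact ⟨_, hrot⟩

end IsCFPeriod

lemma IsMinCFPeriod.exists_eq_rotate_of_cq_eq {x y : ℝ} {b c : List ℤ} {m n : ℕ}
    (hb : IsMinCFPeriod x b) (hc : IsMinCFPeriod y c) (h : cq x m = cq y n) :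
    ∃ k : ℕ, b = c.rotate k := by
  have hcx : IsCFPeriod x (c.rotate n) := hc.1.rotate_of_cq_eq h
  have hby : IsCFPeriod y (b.rotate m) := hb.1.rotate_of_cq_eq h.symm
  have hlen : b.length = (c.rotate n).length := by
    have hbc := hb.2 _ hcx
    have hcb := hc.2 _ hby
    simp only [List.length_rotate] at hbc hcb ⊢
    omega
  obtain ⟨k, hk⟩ := hb.1.exists_eq_rotate_of_length_eq hcx hlen
  exact ⟨n + k, by rw [hk, List.rotate_rotate]⟩

theorem roots_same_period_general
    (p q : ℤ) (x₁ x₂ : ℝ) (h1 : Irrational x₁) (hne : x₁ ≠ x₂)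
    (hroot1 : x₁ ^ 2 + (p : ℝ) * x₁ + (q : ℝ) = 0)
    (hroot2 : x₂ ^ 2 + (p : ℝ) * x₂ + (q : ℝ) = 0)
    (b₁ b₂ : List ℤ) (hb₁ : IsMinCFPeriod x₁ b₁) (hb₂ : IsMinCFPeriod x₂ b₂) :
    ∃ k : ℕ, b₁ = b₂.rotate k := by
  have hvieta : x₁ + x₂ = ((-p : ℤ) : ℝ) := by
    have hfac : (x₁ - x₂) * (x₁ + x₂ + p) = 0 := by linear_combination hroot1 - hroot2
    have := (mul_eq_zero.mp hfac).resolve_left (sub_ne_zero.mpr hne)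
    push_cast
    linarith
  obtain ⟨m, n, h⟩ := exists_cq_eq_of_add_eq_intCast h1 hvieta
  exact hb₁.exists_eq_rotate_of_cq_eq hb₂ h.symm

/-- Arnold: the two real irrational roots of a monic integer quadratic
`x² + px + q = 0` have equal minimal periods as cyclic sequences. -/
theorem roots_same_period
    (p q : ℤ) (x₁ x₂ : ℝ) (h1 : Irrational x₁) (h2 : Irrational x₂) (hne : x₁ ≠ x₂)
    (hroot1 : x₁ ^ 2 + (p : ℝ) * x₁ + (q : ℝ) = 0)
    (hroot2 : x₂ ^ 2 + (p : ℝ) * x₂ + (q : ℝ) = 0)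
    (b₁ b₂ : List ℤ) (hb₁ : IsMinCFPeriod x₁ b₁) (hb₂ : IsMinCFPeriod x₂ b₂) :
    ∃ k : ℕ, b₁ = b₂.rotate k :=
  roots_same_period_general p q x₁ x₂ h1 hne hroot1 hroot2 b₁ b₂ hb₁ hb₂
end
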